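/- arXiv:1805.02507 — 5 statements merged into one kernel-verified Lean document; each statement's English description precedes it below -/
import Mathlib

section
/- Let R : [t₀, t_f] → (nonempty compact subsets of ℝⁿ) be continuous with respect to the Hausdorff distance, with convex values, and strictly expanding, i.e. R(t₁) ⊆ interior(R(t₂)) whenever t₀ ≤ t₁ < t₂ ≤ t_f. Define T(x) = inf { t ∈ [t₀, t_f] : x ∈ R(t) }. Then for every t ∈ (t₀, t_f], the boundary of R(t) equals { x ∈ ℝⁿ : T(x) = t and x ∈ R(t) }. -/
/-!
A point on the boundary of `R t` cannot lie in any earlier `R s`, since that set sits inside the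
interior of `R t`. Conversely, if `x` is interior to `R t`, a ball `B(x, ε)` lies in `R t`, and for
`s < t` close to `t` every point of `R t` is within `ε' < ε` of `R s`. If `x ∉ R s`, a functional
separating `x` from the convex set `R s` finds a point of `B(x, ε)` pushed away from `R s` by more
than `ε'`; hence `x ∈ R s` and the minimum time of `x` is less than `t`.
-/

open Set Metric

namespace ContinuousLinearMap

variable {E : Type*} [NormedAddCommGroup E] [NormedSpace ℝ E]

theorem exists_norm_lt_one_lt_apply (f : StrongDual ℝ E) {c : ℝ} (hc : c < ‖f‖) :
    ∃ w : E, ‖w‖ < 1 ∧ c < f w := by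
  obtain ⟨w, hw, hcw⟩ := f.exists_lt_apply_of_lt_opNorm hc
  rcases le_or_gt 0 (f w) with hfw | hfw
  · exact ⟨w, hw, by rwa [Real.norm_of_nonneg hfw] at hcw⟩
  · refine ⟨-w, by rwa [norm_neg], ?_⟩
    rwa [Real.norm_of_nonpos hfw.le, ← map_neg] at hcw

end ContinuousLinearMap

namespace Convex

variable {E : Type*} [NormedAddCommGroup E] [NormedSpace ℝ E] {K : Set E} {x : E} {r r' : ℝ}

theorem mem_of_forall_mem_closedBall_infDist_le (hK : Convex ℝ K) (hKc : IsCompact K)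
    (hKne : K.Nonempty) (hr' : 0 ≤ r') (hr : r' < r)
    (h : ∀ z ∈ closedBall x r, infDist z K ≤ r') : x ∈ K := by
  by_contra hx
  obtain ⟨f, u, hfK, hfx⟩ := geometric_hahn_banach_closed_point hK hKc.isClosed hx
  have hr₀ : 0 < r := hr'.trans_lt hr
  have hc : (r' * ‖f‖ - (f x - u)) / r < ‖f‖ := by
    rw [div_lt_iff₀ hr₀]
    nlinarith [norm_nonneg f]
  obtain ⟨w, hw, hfw⟩ := f.exists_norm_lt_one_lt_apply hc
  rw [div_lt_iff₀ hr₀] at hfw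
  set z := x + r • w
  have hz : z ∈ closedBall x r := by
    rw [mem_closedBall, dist_eq_norm, add_sub_cancel_left, norm_smul, Real.norm_of_nonneg hr₀.le]
    nlinarith
  obtain ⟨y, hyK, hy⟩ := hKc.exists_infDist_eq_dist hKne z
  have hfar : r' * ‖f‖ < f z - f y := by
    have := hfK y hyK
    simp only [z, map_add, map_smul, smul_eq_mul]
    linarith
  have hnear : f z - f y ≤ r' * ‖f‖ :=
    calc f z - f y = f (z - y) := (map_sub f z y).symm
      _ ≤ ‖f‖ * ‖z - y‖ := (le_abs_self _).trans (f.le_opNorm _)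
      _ ≤ ‖f‖ * r' := by
        rw [← dist_eq_norm, ← hy]
        exact mul_le_mul_of_nonneg_left (h z hz) (norm_nonneg f)
      _ = r' * ‖f‖ := mul_comm _ _
  linarith

theorem mem_of_ball_subset_of_hausdorffDist_lt {L : Set E} {ε : ℝ} (hK : Convex ℝ K)
    (hKc : IsCompact K) (hKne : K.Nonempty) (hL : Bornology.IsBounded L) (hLne : L.Nonempty)
    (hxL : ball x ε ⊆ L) (hLK : hausdorffDist L K < ε) : x ∈ K := by
  obtain ⟨r, hdr, hrε⟩ := exists_between hLK
  refine hK.mem_of_forall_mem_closedBall_infDist_le hKc hKne hausdorffDist_nonneg hdr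
    fun z hz => infDist_le_hausdorffDist_of_mem (hxL (closedBall_subset_ball hrε hz)) ?_
  exact hausdorffEDist_ne_top_of_nonempty_of_bounded hLne hKne hL hKc.isBounded

end Convex

theorem frontier_eq_minTime_level_set_general {n : ℕ} (t₀ tf : ℝ)
    (R : ℝ → Set (EuclideanSpace ℝ (Fin n)))
    (hne : ∀ t ∈ Icc t₀ tf, (R t).Nonempty)
    (hcomp : ∀ t ∈ Icc t₀ tf, IsCompact (R t))
    (hconv : ∀ t ∈ Icc t₀ tf, Convex ℝ (R t))
    (hcont : ∀ t ∈ Icc t₀ tf, ∀ ε > 0, ∃ δ > 0, ∀ s ∈ Icc t₀ tf,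
      |s - t| < δ → hausdorffDist (R s) (R t) < ε)
    (hexp : ∀ t₁ ∈ Icc t₀ tf, ∀ t₂ ∈ Icc t₀ tf, t₁ < t₂ → R t₁ ⊆ interior (R t₂)) :
    ∀ t ∈ Ioc t₀ tf,
      frontier (R t) =
        {x | sInf {s | s ∈ Icc t₀ tf ∧ x ∈ R s} = t ∧ x ∈ R t} := by
  intro t ht
  have htI : t ∈ Icc t₀ tf := Ioc_subset_Icc_self ht
  have hclosed : IsClosed (R t) := (hcomp t htI).isClosed
  ext x
  constructor
  · intro hx
    have hxt : x ∈ R t := hclosed.frontier_subset hx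
    refine ⟨IsLeast.csInf_eq ⟨⟨htI, hxt⟩, fun s hs => not_lt.1 fun hst => ?_⟩, hxt⟩
    exact hx.2 (hexp s hs.1 t htI hst hs.2)
  · rintro ⟨hT, hxt⟩
    rw [hclosed.frontier_eq]
    refine ⟨hxt, fun hint => ?_⟩
    obtain ⟨ε, hε, hball⟩ := Metric.isOpen_iff.1 isOpen_interior x hint
    obtain ⟨δ, hδ, hclose⟩ := hcont t htI ε hε
    obtain ⟨s, hs, hst⟩ := exists_between (max_lt ht.1 (sub_lt_self t hδ))
    have hsI : s ∈ Icc t₀ tf := ⟨(le_max_left _ _).trans hs.le, hst.le.trans ht.2⟩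
    have hts : hausdorffDist (R t) (R s) < ε := by
      rw [hausdorffDist_comm]
      exact hclose s hsI (abs_sub_lt_iff.2 ⟨by linarith, by linarith [le_max_right t₀ (t - δ)]⟩)
    have hxs : x ∈ R s := (hconv s hsI).mem_of_ball_subset_of_hausdorffDist_lt (hcomp s hsI)
      (hne s hsI) (hcomp t htI).isBounded (hne t htI) (hball.trans interior_subset) hts
    exact hst.not_ge (hT ▸ csInf_le ⟨t₀, fun r hr => hr.1.1⟩ ⟨hsI, hxs⟩)

/-- Boundary characterization of a strictly expanding, Hausdorff-continuous family of
nonempty convex compact sets via the level set of the associated minimum time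
function `T x = inf { t ∈ [t₀, t_f] : x ∈ R t }`. -/
theorem frontier_eq_minTime_level_set {n : ℕ} (t₀ tf : ℝ) (ht : t₀ < tf)
    (R : ℝ → Set (EuclideanSpace ℝ (Fin n)))
    (hne : ∀ t ∈ Icc t₀ tf, (R t).Nonempty)
    (hcomp : ∀ t ∈ Icc t₀ tf, IsCompact (R t))
    (hconv : ∀ t ∈ Icc t₀ tf, Convex ℝ (R t))
    (hcont : ∀ t ∈ Icc t₀ tf, ∀ ε > 0, ∃ δ > 0, ∀ s ∈ Icc t₀ tf,
      |s - t| < δ → hausdorffDist (R s) (R t) < ε)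
    (hexp : ∀ t₁ ∈ Icc t₀ tf, ∀ t₂ ∈ Icc t₀ tf, t₁ < t₂ → R t₁ ⊆ interior (R t₂)) :
    ∀ t ∈ Ioc t₀ tf,
      frontier (R t) =
        {x | sInf {s | s ∈ Icc t₀ tf ∧ x ∈ R s} = t ∧ x ∈ R t} :=
  frontier_eq_minTime_level_set_general t₀ tf R hne hcomp hconv hcont hexp
end

section
/- Let R : [t₀, t_f] → (nonempty convex compact subsets of ℝⁿ) be strictly expanding (R(t₁) ⊆ interior R(t₂) for t₁ < t₂) and Hausdorff-continuous. If x ∈ interior(R(t)) for some t ∈ (t₀, t_f], then there exists t₁ < t with x ∈ R(t₁). -/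
/-!
If `x` were not in the earlier set `R t₁`, a hyperplane would separate `x` from the convex set
`R t₁`. Moving from `x` across that hyperplane, away from `R t₁`, by slightly less than the radius
`ε` of a ball around `x` inside `R t` gives a point of `R t` at distance more than
`hausdorffDist (R t₁) (R t)` from `R t₁`. This is impossible once `t₁` is close enough to `t`
that this Hausdorff distance is below `ε`.
-/

open Set Metric

section NormedSpace

variable {E : Type*} [NormedAddCommGroup E] [NormedSpace ℝ E]

theorem ContinuousLinearMap.exists_norm_lt_one_lt_apply_s3 (f : E →L[ℝ] ℝ) {r : ℝ} (hr : r < ‖f‖) :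
    ∃ v, ‖v‖ < 1 ∧ r < f v := by
  obtain ⟨v, hv, hrv⟩ := f.exists_lt_apply_of_lt_opNorm hr
  rcases le_total 0 (f v) with h | h
  · exact ⟨v, hv, by rwa [Real.norm_of_nonneg h] at hrv⟩
  · exact ⟨-v, by rwa [norm_neg], by rwa [map_neg, ← Real.norm_of_nonpos h]⟩

theorem Convex.mem_of_ball_subset_thickening {K : Set E} {x : E} {r r' : ℝ}
    (hconv : Convex ℝ K) (hclosed : IsClosed K) (hr : 0 < r) (hr'r : r' < r)
    (hsub : ball x r ⊆ Metric.thickening r' K) : x ∈ K := by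
  by_contra hxK
  obtain ⟨f, u, hfK, hux⟩ := geometric_hahn_banach_closed_point hconv hclosed hxK
  obtain ⟨b₀, hb₀, hxb₀⟩ := mem_thickening_iff.1 (hsub (mem_ball_self hr))
  have hr' : 0 < r' := dist_nonneg.trans_lt hxb₀
  have hf : 0 < ‖f‖ := norm_pos_iff.2 fun hf => by
    have := hfK b₀ hb₀
    simp only [hf, zero_apply] at this hux
    linarith
  -- Moving by `s • v` raises `f` by more than `‖f‖ * r'`, more than a point of `K` within `r'` can.
  obtain ⟨s, hr's, hsr⟩ := exists_between hr'r
  have hs : 0 < s := hr'.trans hr's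
  obtain ⟨v, hv, hfv⟩ := f.exists_norm_lt_one_lt_apply_s3
    ((div_lt_iff₀ hs).2 (mul_lt_mul_of_pos_left hr's hf))
  have hy : x + s • v ∈ ball x r := by
    rw [mem_ball, dist_self_add_left, norm_smul, Real.norm_of_nonneg hs.le]
    nlinarith [norm_nonneg v]
  obtain ⟨b, hb, hyb⟩ := mem_thickening_iff.1 (hsub hy)
  have hfy : f (x + s • v) = f x + s * f v := by simp
  have hgain : ‖f‖ * r' < s * f v := (div_lt_iff₀' hs).1 hfv
  have hloss : f (x + s • v) - f b ≤ ‖f‖ * r' :=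
    calc f (x + s • v) - f b = f (x + s • v - b) := (map_sub f _ _).symm
      _ ≤ ‖f‖ * ‖x + s • v - b‖ := (le_abs_self _).trans (f.le_opNorm _)
      _ ≤ ‖f‖ * r' := by
        gcongr
        rw [← dist_eq_norm]; exact hyb.le
  linarith [hfK b hb]

end NormedSpace

theorem subset_thickening_of_hausdorffDist_lt {X : Type*} [PseudoMetricSpace X] {s t : Set X}
    {r : ℝ} (hfin : hausdorffEDist s t ≠ ⊤) (hr : hausdorffDist s t < r) :
    t ⊆ thickening r s := fun _ hy =>
  mem_thickening_iff.2 <| by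
    obtain ⟨x, hx, hxy⟩ := exists_dist_lt_of_hausdorffDist_lt' hy hr hfin
    exact ⟨x, hx, by rwa [dist_comm]⟩

theorem exists_mem_Icc_lt_abs_sub_lt {a b t δ : ℝ} (ht : t ∈ Ioc a b) (hδ : 0 < δ) :
    ∃ s ∈ Icc a b, s < t ∧ |s - t| < δ := by
  have hs : t - δ / 2 ≤ max a (t - δ / 2) := le_max_right _ _
  have hst : max a (t - δ / 2) < t := max_lt ht.1 (by linarith)
  refine ⟨max a (t - δ / 2), ⟨le_max_left _ _, by linarith [ht.2]⟩, hst, ?_⟩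
  rw [abs_sub_lt_iff]
  constructor <;> linarith

theorem interior_reached_earlier_general {n : ℕ} (t₀ tf : ℝ)
    (R : ℝ → Set (EuclideanSpace ℝ (Fin n)))
    (hne : ∀ t ∈ Icc t₀ tf, (R t).Nonempty)
    (hcomp : ∀ t ∈ Icc t₀ tf, IsCompact (R t))
    (hconv : ∀ t ∈ Icc t₀ tf, Convex ℝ (R t))
    (hcont : ∀ t ∈ Icc t₀ tf, ∀ ε > 0, ∃ δ > 0, ∀ s ∈ Icc t₀ tf,
      |s - t| < δ → hausdorffDist (R s) (R t) < ε)
    (t : ℝ) (htI : t ∈ Ioc t₀ tf) (x : EuclideanSpace ℝ (Fin n))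
    (hx : x ∈ interior (R t)) :
    ∃ t₁ ∈ Icc t₀ tf, t₁ < t ∧ x ∈ R t₁ := by
  have htIcc : t ∈ Icc t₀ tf := Ioc_subset_Icc_self htI
  obtain ⟨ε, hε, hball⟩ := Metric.isOpen_iff.1 isOpen_interior x hx
  obtain ⟨δ, hδ, hδcont⟩ := hcont t htIcc ε hε
  obtain ⟨t₁, ht₁, ht₁t, hδt₁⟩ := exists_mem_Icc_lt_abs_sub_lt htI hδ
  obtain ⟨r, hdist, hrε⟩ := exists_between (hδcont t₁ ht₁ hδt₁)
  have hfin : hausdorffEDist (R t₁) (R t) ≠ ⊤ :=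
    hausdorffEDist_ne_top_of_nonempty_of_bounded (hne t₁ ht₁) (hne t htIcc)
      (hcomp t₁ ht₁).isBounded (hcomp t htIcc).isBounded
  refine ⟨t₁, ht₁, ht₁t,
    (hconv t₁ ht₁).mem_of_ball_subset_thickening (hcomp t₁ ht₁).isClosed hε hrε ?_⟩
  exact (hball.trans interior_subset).trans (subset_thickening_of_hausdorffDist_lt hfin hdist)

/-- Interior points of `R t` are reached strictly earlier: if `R` is a strictly
expanding, Hausdorff-continuous family of nonempty convex compact sets and
`x ∈ interior (R t)` for `t ∈ (t₀, t_f]`, then `x ∈ R t₁` for some `t₁ < t`. -/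
theorem interior_reached_earlier {n : ℕ} (t₀ tf : ℝ) (ht : t₀ < tf)
    (R : ℝ → Set (EuclideanSpace ℝ (Fin n)))
    (hne : ∀ t ∈ Icc t₀ tf, (R t).Nonempty)
    (hcomp : ∀ t ∈ Icc t₀ tf, IsCompact (R t))
    (hconv : ∀ t ∈ Icc t₀ tf, Convex ℝ (R t))
    (hcont : ∀ t ∈ Icc t₀ tf, ∀ ε > 0, ∃ δ > 0, ∀ s ∈ Icc t₀ tf,
      |s - t| < δ → hausdorffDist (R s) (R t) < ε)
    (hexp : ∀ t₁ ∈ Icc t₀ tf, ∀ t₂ ∈ Icc t₀ tf, t₁ < t₂ → R t₁ ⊆ interior (R t₂))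
    (t : ℝ) (htI : t ∈ Ioc t₀ tf) (x : EuclideanSpace ℝ (Fin n))
    (hx : x ∈ interior (R t)) :
    ∃ t₁ ∈ Icc t₀ tf, t₁ < t ∧ x ∈ R t₁ :=
  interior_reached_earlier_general t₀ tf R hne hcomp hconv hcont t htI x hx
end

section
/- Let A, B be nonempty convex compact subsets of ℝⁿ whose boundaries are denoted ∂A, ∂B. Then the Hausdorff distance between ∂A and ∂B equals the Hausdorff distance between A and B: d_H(∂A, ∂B) = d_H(A, B). -/
/-!
Every point of a bounded set lies on a chord joining two of its boundary points, and the
distance to a convex set is a convex function of the point; hence on `A` the distance to `B` is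
dominated by its values on `∂A`, and since `∂B ⊆ B` this gives
`d_H(A, B) ≤ d_H(∂A, ∂B)`.

Conversely, let `x ∈ ∂A`, `r = d_H(A, B)`, `ε > 0` and let `u` be an outer unit normal of `A`
at `x`. The point `x + (r + ε) u` is at distance at least `r + ε` from `A`, so it lies outside
`B`, while the closed ball of radius `r + ε` about `x` meets `B`. Being connected, this ball
meets `∂B`, so `infDist x ∂B ≤ r + ε`.
-/

open Bornology Metric Set RealInnerProductSpace

theorem IsPreconnected.inter_frontier_nonempty {X : Type*} [TopologicalSpace X] {s t : Set X}
    (hs : IsPreconnected s) (hst : (s ∩ t).Nonempty) (hst' : (s \ t).Nonempty) :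
    (s ∩ frontier t).Nonempty := by
  by_contra! h
  have hcover : s ⊆ interior t ∪ (closure t)ᶜ := fun z hz => by
    by_cases hzt : z ∈ closure t
    · exact .inl (by_contra fun hzi => h.subset ⟨hz, hzt, hzi⟩)
    · exact .inr hzt
  rcases hs.subset_or_subset isOpen_interior isClosed_closure.isOpen_compl
      (disjoint_compl_right.mono_left interior_subset_closure) hcover with hsub | hsub
  · obtain ⟨z, hzs, hzt⟩ := hst'
    exact hzt (interior_subset (hsub hzs))
  · obtain ⟨z, hzs, hzt⟩ := hst
    exact hsub hzs (subset_closure hzt)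

section NormedSpace

variable {E : Type*} [NormedAddCommGroup E] [NormedSpace ℝ E]

theorem Convex.convexOn_infDist {B : Set E} (hB : Convex ℝ B) :
    ConvexOn ℝ univ (infDist · B) := by
  refine ⟨convex_univ, fun x _ y _ a b ha hb hab => ?_⟩
  rcases B.eq_empty_or_nonempty with rfl | hBne
  · simp
  refine le_of_forall_pos_le_add fun ε hε => ?_
  obtain ⟨p, hp, hxp⟩ := (infDist_lt_iff hBne).1 (lt_add_of_pos_right (infDist x B) hε)
  obtain ⟨q, hq, hyq⟩ := (infDist_lt_iff hBne).1 (lt_add_of_pos_right (infDist y B) hε)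
  calc infDist (a • x + b • y) B ≤ dist (a • x + b • y) (a • p + b • q) :=
        infDist_le_dist_of_mem (hB hp hq ha hb hab)
    _ ≤ dist (a • x) (a • p) + dist (b • y) (b • q) := dist_add_add_le _ _ _ _
    _ = a * dist x p + b * dist y q := by
        rw [dist_smul₀, dist_smul₀, Real.norm_of_nonneg ha, Real.norm_of_nonneg hb]
    _ ≤ a * (infDist x B + ε) + b * (infDist y B + ε) := by gcongr
    _ = a * infDist x B + b * infDist y B + ε := by linear_combination ε * hab

theorem Bornology.IsBounded.exists_nonneg_add_smul_mem_frontier {A : Set E}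
    (hA : IsBounded A) {a : E} (ha : a ∈ A) {u : E} (hu : u ≠ 0) :
    ∃ t : ℝ, 0 ≤ t ∧ a + t • u ∈ frontier A := by
  obtain ⟨R, hR⟩ := hA.subset_closedBall a
  have hR0 : 0 ≤ R := dist_nonneg.trans (mem_closedBall.1 (hR ha))
  have ht : 0 ≤ (R + 1) / ‖u‖ := by positivity
  have hray : IsPreconnected ((fun s : ℝ => a + s • u) '' Ici 0) :=
    isPreconnected_Ici.image _ (by fun_prop)
  have hfar : a + ((R + 1) / ‖u‖) • u ∉ A := fun h => by
    have := mem_closedBall.1 (hR h)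
    rw [dist_self_add_left, norm_smul, Real.norm_of_nonneg ht,
      div_mul_cancel₀ _ (norm_ne_zero_iff.2 hu)] at this
    linarith
  obtain ⟨_, ⟨s, hs, rfl⟩, hfr⟩ := hray.inter_frontier_nonempty
    ⟨a, ⟨0, self_mem_Ici, by simp⟩, ha⟩ ⟨_, ⟨_, ht, rfl⟩, hfar⟩
  exact ⟨s, hs, hfr⟩

theorem Bornology.IsBounded.subset_convexHull_frontier [Nontrivial E] {A : Set E}
    (hA : IsBounded A) : A ⊆ convexHull ℝ (frontier A) := by
  intro a ha
  obtain ⟨u, hu⟩ := exists_ne (0 : E)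
  obtain ⟨s, hs, hsA⟩ := hA.exists_nonneg_add_smul_mem_frontier ha hu
  obtain ⟨t, ht, htA⟩ := hA.exists_nonneg_add_smul_mem_frontier ha (neg_ne_zero.2 hu)
  refine segment_subset_convexHull hsA htA ?_
  rw [mem_segment_iff_sameRay, show a - (a + s • u) = s • (-u) by module,
    show a + t • (-u) - a = t • (-u) by module]
  exact (SameRay.sameRay_nonneg_smul_left (-u) hs).nonneg_smul_right ht

theorem Bornology.IsBounded.frontier_nonempty [Nontrivial E] {A : Set E}
    (hA : IsBounded A) (hAne : A.Nonempty) : (frontier A).Nonempty :=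
  convexHull_nonempty_iff.1 (hAne.mono hA.subset_convexHull_frontier)

theorem infDist_le_hausdorffDist_frontier [Nontrivial E] {A B : Set E}
    (hA : IsBounded A) (hB : Convex ℝ B) (hBc : IsClosed B)
    (hfin : hausdorffEDist (frontier A) (frontier B) ≠ ⊤) {a : E} (ha : a ∈ A) :
    infDist a B ≤ hausdorffDist (frontier A) (frontier B) := by
  obtain ⟨x, hx, hax⟩ := hB.convexOn_infDist.exists_ge_of_mem_convexHull (subset_univ _)
    (hA.subset_convexHull_frontier ha)
  calc infDist a B ≤ infDist x B := hax
    _ ≤ infDist x (frontier B) := infDist_le_infDist_of_subset hBc.frontier_subset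
        (nonempty_of_hausdorffEDist_ne_top ⟨x, hx⟩ hfin)
    _ ≤ hausdorffDist (frontier A) (frontier B) := infDist_le_hausdorffDist_of_mem hx hfin

theorem hausdorffDist_le_hausdorffDist_frontier [Nontrivial E] {A B : Set E}
    (hA : IsBounded A) (hAconv : Convex ℝ A) (hAc : IsClosed A)
    (hB : IsBounded B) (hBconv : Convex ℝ B) (hBc : IsClosed B)
    (hfin : hausdorffEDist (frontier A) (frontier B) ≠ ⊤) :
    hausdorffDist A B ≤ hausdorffDist (frontier A) (frontier B) := by
  refine hausdorffDist_le_of_infDist hausdorffDist_nonneg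
    (fun a ha => infDist_le_hausdorffDist_frontier hA hBconv hBc hfin ha) fun b hb => ?_
  rw [hausdorffDist_comm]
  exact infDist_le_hausdorffDist_frontier hB hAconv hAc (by rwa [hausdorffEDist_comm]) hb

theorem Convex.exists_ne_zero_forall_le_of_notMem_interior [FiniteDimensional ℝ E] {A : Set E}
    (hA : Convex ℝ A) {x : E} (hxA : x ∈ A) (hx : x ∉ interior A) :
    ∃ f : StrongDual ℝ E, f ≠ 0 ∧ ∀ a ∈ A, f a ≤ f x := by
  by_cases hint : (interior A).Nonempty
  · exact geometric_hahn_banach_of_nonempty_interior_point hA hx hint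
  -- A convex set with empty interior lies in a proper affine subspace; take a functional
  -- vanishing on its direction.
  have hdir : (affineSpan ℝ A).direction < ⊤ := by
    rwa [lt_top_iff_ne_top, Ne, AffineSubspace.direction_eq_top_iff_of_nonempty
      ((affineSpan_nonempty ℝ).2 ⟨x, hxA⟩), ← hA.interior_nonempty_iff_affineSpan_eq_top]
  obtain ⟨f, hf0, hker⟩ := (affineSpan ℝ A).direction.exists_le_ker_of_lt_top hdir
  refine ⟨LinearMap.toContinuousLinearMap f, by simpa using hf0, fun a ha => le_of_eq ?_⟩
  have := hker (AffineSubspace.vsub_mem_direction (subset_affineSpan ℝ A ha)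
    (subset_affineSpan ℝ A hxA))
  simpa [sub_eq_zero] using this

end NormedSpace

section InnerProductSpace

variable {E : Type*} [NormedAddCommGroup E] [InnerProductSpace ℝ E]

theorem Convex.exists_norm_eq_one_forall_inner_le_of_notMem_interior [FiniteDimensional ℝ E]
    {A : Set E} (hA : Convex ℝ A) {x : E} (hxA : x ∈ A) (hx : x ∉ interior A) :
    ∃ u : E, ‖u‖ = 1 ∧ ∀ a ∈ A, ⟪u, a⟫ ≤ ⟪u, x⟫ := by
  obtain ⟨f, hf0, hf⟩ := hA.exists_ne_zero_forall_le_of_notMem_interior hxA hx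
  set v := (InnerProductSpace.toDual ℝ E).symm f
  have hv : v ≠ 0 := by simpa [v] using hf0
  refine ⟨‖v‖⁻¹ • v, norm_smul_inv_norm hv, fun a ha => ?_⟩
  simp only [real_inner_smul_left, v, InnerProductSpace.toDual_symm_apply]
  exact mul_le_mul_of_nonneg_left (hf a ha) (by positivity)

theorem le_infDist_add_smul_of_forall_inner_le {A : Set E} {x u : E} (hxA : x ∈ A)
    (hu : ‖u‖ = 1) (hA : ∀ a ∈ A, ⟪u, a⟫ ≤ ⟪u, x⟫) {s : ℝ} :
    s ≤ infDist (x + s • u) A := by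
  refine (le_infDist ⟨x, hxA⟩).2 fun a ha => ?_
  calc s = ⟪u, x + s • u - x⟫ := by
        rw [add_sub_cancel_left, real_inner_smul_right, real_inner_self_eq_norm_sq, hu]; ring
    _ ≤ ⟪u, x + s • u - a⟫ := by
        rw [inner_sub_right, inner_sub_right]; linarith [hA a ha]
    _ ≤ ‖u‖ * ‖x + s • u - a‖ := real_inner_le_norm _ _
    _ = dist (x + s • u) a := by rw [hu, one_mul, dist_eq_norm]

theorem infDist_frontier_le_hausdorffDist [FiniteDimensional ℝ E] {A B : Set E}
    (hA : Convex ℝ A) (hAc : IsClosed A) (hfin : hausdorffEDist A B ≠ ⊤) {x : E}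
    (hx : x ∈ frontier A) : infDist x (frontier B) ≤ hausdorffDist A B := by
  have hxA : x ∈ A := hAc.frontier_subset hx
  obtain ⟨u, hu, hux⟩ := hA.exists_norm_eq_one_forall_inner_le_of_notMem_interior hxA hx.2
  refine le_of_forall_pos_le_add fun ε hε => ?_
  obtain ⟨b, hb, hxb⟩ : ∃ b ∈ B, dist x b < hausdorffDist A B + ε :=
    (infDist_lt_iff (nonempty_of_hausdorffEDist_ne_top ⟨x, hxA⟩ hfin)).1
      ((infDist_le_hausdorffDist_of_mem hxA hfin).trans_lt (lt_add_of_pos_right _ hε))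
  have hout : x + (hausdorffDist A B + ε) • u ∉ B := fun h => by
    have hle : infDist (x + (hausdorffDist A B + ε) • u) A ≤ hausdorffDist A B :=
      (infDist_le_hausdorffDist_of_mem h (by rwa [hausdorffEDist_comm])).trans_eq
        hausdorffDist_comm
    linarith [le_infDist_add_smul_of_forall_inner_le hxA hu hux (s := hausdorffDist A B + ε)]
  have hin : x + (hausdorffDist A B + ε) • u ∈ closedBall x (hausdorffDist A B + ε) := by
    rw [mem_closedBall, dist_self_add_left, norm_smul, hu, mul_one,
      Real.norm_of_nonneg (add_nonneg hausdorffDist_nonneg hε.le)]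
  obtain ⟨p, hp, hpB⟩ := (convex_closedBall x _).isPreconnected.inter_frontier_nonempty
    ⟨b, mem_closedBall_comm.1 hxb.le, hb⟩ ⟨_, hin, hout⟩
  exact (infDist_le_dist_of_mem hpB).trans (mem_closedBall_comm.1 hp)

theorem hausdorffDist_frontier_le_hausdorffDist [FiniteDimensional ℝ E] {A B : Set E}
    (hA : Convex ℝ A) (hAc : IsClosed A) (hB : Convex ℝ B) (hBc : IsClosed B)
    (hfin : hausdorffEDist A B ≠ ⊤) :
    hausdorffDist (frontier A) (frontier B) ≤ hausdorffDist A B := by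
  refine hausdorffDist_le_of_infDist hausdorffDist_nonneg
    (fun x hx => infDist_frontier_le_hausdorffDist hA hAc hfin hx) fun x hx => ?_
  rw [hausdorffDist_comm]
  exact infDist_frontier_le_hausdorffDist hB hBc (by rwa [hausdorffEDist_comm]) hx

end InnerProductSpace

/-- For nonempty convex compact sets `A`, `B` in `ℝⁿ`, the Hausdorff distance of the
boundaries equals the Hausdorff distance of the sets. -/
theorem hausdorffDist_frontier_eq {n : ℕ}
    (A B : Set (EuclideanSpace ℝ (Fin n)))
    (hAne : A.Nonempty) (hAconv : Convex ℝ A) (hAcomp : IsCompact A)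
    (hBne : B.Nonempty) (hBconv : Convex ℝ B) (hBcomp : IsCompact B) :
    hausdorffDist (frontier A) (frontier B) = hausdorffDist A B := by
  rcases subsingleton_or_nontrivial (EuclideanSpace ℝ (Fin n)) with _ | _
  · rw [Subsingleton.eq_univ_of_nonempty hAne, Subsingleton.eq_univ_of_nonempty hBne]
    simp
  have hfin : hausdorffEDist A B ≠ ⊤ := hausdorffEDist_ne_top_of_nonempty_of_bounded hAne hBne
    hAcomp.isBounded hBcomp.isBounded
  have hfinFrontier : hausdorffEDist (frontier A) (frontier B) ≠ ⊤ :=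
    hausdorffEDist_ne_top_of_nonempty_of_bounded (hAcomp.isBounded.frontier_nonempty hAne)
      (hBcomp.isBounded.frontier_nonempty hBne)
      (hAcomp.isBounded.subset hAcomp.isClosed.frontier_subset)
      (hBcomp.isBounded.subset hBcomp.isClosed.frontier_subset)
  exact le_antisymm
    (hausdorffDist_frontier_le_hausdorffDist hAconv hAcomp.isClosed hBconv hBcomp.isClosed hfin)
    (hausdorffDist_le_hausdorffDist_frontier hAcomp.isBounded hAconv hAcomp.isClosed
      hBcomp.isBounded hBconv hBcomp.isClosed hfinFrontier)
end

section
/- Let A be a nonempty convex compact subset of ℝⁿ contained in the ball of radius M, and let ℓ¹, …, ℓᴺ ∈ S^{n-1} be finitely many unit directions with d_H(S^{n-1}, {ℓ¹,…,ℓᴺ}) ≤ ρ for some 0 ≤ ρ < 1. Let A_Δ be the convex hull of one supporting point y(ℓᵏ, A) ∈ A with ⟨ℓᵏ, y(ℓᵏ,A)⟩ = δ*(ℓᵏ, A) for each k. Then A_Δ ⊆ A and d_H(A, A_Δ) ≤ c·M·ρ for a constant c depending only on n (in fact one may take the bound 2Mρ/(1−ρ) or similar explicit bound). -/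
/-!
Every point `x ∈ A` is within `2Mρ` of `A_Δ`. Let `z` be the nearest point of `A_Δ` to `x` and
`v` the unit outer normal `(x - z)/‖x - z‖`; then `dist x z ≤ ⟪v, x - y⟫` for every `y ∈ A_Δ`.
Pick a direction `ℓᵏ` with `‖v - ℓᵏ‖ ≤ ρ`: since `y(ℓᵏ, A)` maximises `⟪ℓᵏ, ·⟫` on `A`,
`⟪v, x - y(ℓᵏ, A)⟫ ≤ ⟪v - ℓᵏ, x - y(ℓᵏ, A)⟫ ≤ ρ · 2M`.
-/

open Metric
open scoped RealInnerProductSpace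

theorem Metric.exists_dist_le_of_hausdorffDist_le {α : Type*} [PseudoMetricSpace α]
    {s t : Set α} {x : α} {r : ℝ} (hx : x ∈ s) (hs : Bornology.IsBounded s) (ht : IsCompact t)
    (hne : t.Nonempty) (h : hausdorffDist s t ≤ r) : ∃ y ∈ t, dist x y ≤ r := by
  obtain ⟨y, hy, hxy⟩ := ht.exists_infDist_eq_dist hne x
  have hfin := hausdorffEDist_ne_top_of_nonempty_of_bounded ⟨x, hx⟩ hne hs ht.isBounded
  exact ⟨y, hy, hxy ▸ (infDist_le_hausdorffDist_of_mem hx hfin).trans h⟩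

section InnerProductSpace

variable {E : Type*} [NormedAddCommGroup E] [InnerProductSpace ℝ E]

theorem real_inner_le_mul_norm_of_norm_sub_le {v ℓ a : E} {ρ : ℝ} (hvℓ : ‖v - ℓ‖ ≤ ρ)
    (hℓ : ⟪ℓ, a⟫ ≤ 0) : ⟪v, a⟫ ≤ ρ * ‖a‖ :=
  calc ⟪v, a⟫ = ⟪v - ℓ, a⟫ + ⟪ℓ, a⟫ := by rw [inner_sub_left]; ring
    _ ≤ ‖v - ℓ‖ * ‖a‖ + 0 := add_le_add (real_inner_le_norm _ _) hℓ
    _ ≤ ρ * ‖a‖ := by rw [add_zero]; exact mul_le_mul_of_nonneg_right hvℓ (norm_nonneg _)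

theorem sq_norm_sub_le_inner_of_inner_le_zero {x z y : E}
    (hz : ⟪x - z, y - z⟫ ≤ 0) : ‖x - z‖ ^ 2 ≤ ⟪x - z, x - y⟫ :=
  calc ‖x - z‖ ^ 2 = ⟪x - z, x - y⟫ + ⟪x - z, y - z⟫ := by
        rw [← real_inner_self_eq_norm_sq, ← inner_add_right, sub_add_sub_cancel]
    _ ≤ ⟪x - z, x - y⟫ := by linarith

theorem Metric.infDist_le_of_forall_sphere_exists_inner_le {B : Set E} (hBc : IsCompact B)
    (hBconv : Convex ℝ B) {x : E} {r : ℝ} (hr : 0 ≤ r)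
    (h : ∀ v ∈ sphere (0 : E) 1, ∃ y ∈ B, ⟪v, x - y⟫ ≤ r) : infDist x B ≤ r := by
  rcases B.eq_empty_or_nonempty with rfl | hBne
  · simpa using hr
  obtain ⟨z, hzB, hz⟩ := hBc.exists_infDist_eq_dist hBne x
  rcases eq_or_ne (x - z) 0 with hxz | hxz
  · rwa [hz, dist_eq_norm, hxz, norm_zero]
  have hproj : ∀ w ∈ B, ⟪x - z, w - z⟫ ≤ 0 := by
    refine (norm_eq_iInf_iff_real_inner_le_zero hBconv hzB).1 ?_
    simpa only [infDist_eq_iInf, dist_eq_norm] using hz.symm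
  obtain ⟨y, hyB, hy⟩ := h (‖x - z‖⁻¹ • (x - z))
    (mem_sphere_zero_iff_norm.2 (norm_smul_inv_norm (𝕜 := ℝ) hxz))
  rw [real_inner_smul_left] at hy
  have hkey := sq_norm_sub_le_inner_of_inner_le_zero (hproj y hyB)
  rw [hz, dist_eq_norm]
  calc ‖x - z‖ = ‖x - z‖⁻¹ * ‖x - z‖ ^ 2 := by field_simp
    _ ≤ ‖x - z‖⁻¹ * ⟪x - z, x - y⟫ := by gcongr
    _ ≤ r := hy

theorem real_inner_sub_nonpos_of_eq_sSup {A : Set E} (hA : IsCompact A) {ℓ x y : E} (hx : x ∈ A)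
    (hy : ⟪ℓ, y⟫ = sSup ((fun x => ⟪ℓ, x⟫) '' A)) : ⟪ℓ, x - y⟫ ≤ 0 := by
  have hbdd : BddAbove ((fun x => ⟪ℓ, x⟫) '' A) := (hA.image (by fun_prop)).bddAbove
  rw [inner_sub_right, sub_nonpos, hy]
  exact le_csSup hbdd ⟨x, hx, rfl⟩

end InnerProductSpace

theorem suppPoints_convexHull_approx_general {n N : ℕ} (hN : 0 < N) (M ρ : ℝ)
    (hρ0 : 0 ≤ ρ) (hρ1 : ρ < 1)
    (A : Set (EuclideanSpace ℝ (Fin n)))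
    (hAne : A.Nonempty) (hAconv : Convex ℝ A) (hAcomp : IsCompact A)
    (hAM : A ⊆ closedBall (0 : EuclideanSpace ℝ (Fin n)) M)
    (ℓ : Fin N → EuclideanSpace ℝ (Fin n))
    (hdense : hausdorffDist (sphere (0 : EuclideanSpace ℝ (Fin n)) 1)
      (Set.range ℓ) ≤ ρ)
    (y : Fin N → EuclideanSpace ℝ (Fin n))
    (hyA : ∀ k, y k ∈ A)
    (hysupp : ∀ k, ⟪ℓ k, y k⟫ = sSup ((fun x => ⟪ℓ k, x⟫) '' A)) :
    convexHull ℝ (Set.range y) ⊆ A ∧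
      hausdorffDist A (convexHull ℝ (Set.range y)) ≤ 2 * M * ρ / (1 - ρ) := by
  have hsub : convexHull ℝ (Set.range y) ⊆ A :=
    convexHull_min (Set.range_subset_iff.2 hyA) hAconv
  refine ⟨hsub, ?_⟩
  obtain ⟨a, ha⟩ := hAne
  have hr : 0 ≤ 2 * M * ρ := by
    have : 0 ≤ M := (norm_nonneg a).trans (mem_closedBall_zero_iff.1 (hAM ha))
    positivity
  have hdir (v) (hv : v ∈ sphere (0 : EuclideanSpace ℝ (Fin n)) 1) : ∃ k, ‖v - ℓ k‖ ≤ ρ := by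
    obtain ⟨_, ⟨k, rfl⟩, hk⟩ := exists_dist_le_of_hausdorffDist_le hv isBounded_sphere
      (Set.finite_range ℓ).isCompact (Set.range_nonempty_iff_nonempty.2 ⟨⟨0, hN⟩⟩) hdense
    exact ⟨k, by rwa [← dist_eq_norm]⟩
  have hdiam {x w} (hx : x ∈ A) (hw : w ∈ A) : ‖x - w‖ ≤ 2 * M := by
    have := norm_sub_le_of_le (mem_closedBall_zero_iff.1 (hAM hx))
      (mem_closedBall_zero_iff.1 (hAM hw))
    linarith
  calc hausdorffDist A (convexHull ℝ (Set.range y)) ≤ 2 * M * ρ := by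
        refine hausdorffDist_le_of_infDist hr (fun x hx => ?_)
          (fun x hx => (infDist_zero_of_mem (hsub hx)).trans_le hr)
        refine infDist_le_of_forall_sphere_exists_inner_le
          ((Set.finite_range y).isCompact_convexHull (𝕜 := ℝ)) (convex_convexHull ℝ _) hr
          fun v hv => ?_
        obtain ⟨k, hk⟩ := hdir v hv
        refine ⟨y k, subset_convexHull ℝ _ ⟨k, rfl⟩, ?_⟩
        calc ⟪v, x - y k⟫ ≤ ρ * ‖x - y k‖ :=
              real_inner_le_mul_norm_of_norm_sub_le hk
                (real_inner_sub_nonpos_of_eq_sSup hAcomp hx (hysupp k))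
          _ ≤ 2 * M * ρ := by nlinarith [hdiam hx (hyA k)]
    _ ≤ 2 * M * ρ / (1 - ρ) := le_div_self hr (by linarith) (by linarith)

/-- Approximation of a convex compact set by the convex hull of supporting points in a
`ρ`-dense finite set of unit directions: `A_Δ ⊆ A` and `d_H(A, A_Δ) ≤ 2Mρ/(1-ρ)`. -/
theorem suppPoints_convexHull_approx {n N : ℕ} (hN : 0 < N) (M ρ : ℝ)
    (hρ0 : 0 ≤ ρ) (hρ1 : ρ < 1)
    (A : Set (EuclideanSpace ℝ (Fin n)))
    (hAne : A.Nonempty) (hAconv : Convex ℝ A) (hAcomp : IsCompact A)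
    (hAM : A ⊆ closedBall (0 : EuclideanSpace ℝ (Fin n)) M)
    (ℓ : Fin N → EuclideanSpace ℝ (Fin n))
    (hℓ : ∀ k, ℓ k ∈ sphere (0 : EuclideanSpace ℝ (Fin n)) 1)
    (hdense : hausdorffDist (sphere (0 : EuclideanSpace ℝ (Fin n)) 1)
      (Set.range ℓ) ≤ ρ)
    (y : Fin N → EuclideanSpace ℝ (Fin n))
    (hyA : ∀ k, y k ∈ A)
    (hysupp : ∀ k, ⟪ℓ k, y k⟫ = sSup ((fun x => ⟪ℓ k, x⟫) '' A)) :
    convexHull ℝ (Set.range y) ⊆ A ∧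
      hausdorffDist A (convexHull ℝ (Set.range y)) ≤ 2 * M * ρ / (1 - ρ) :=
  suppPoints_convexHull_approx_general hN M ρ hρ0 hρ1 A hAne hAconv hAcomp hAM ℓ hdense y hyA hysupp
end

section
/- The support function of the reachable set R(t) = Φ(t,t₀)S + ∫_{t₀}^{t} Φ(t,s)B(s)U ds in direction ℓ ∈ ℝⁿ equals δ*(ℓ, R(t)) = δ*(Φ(t,t₀)ᵀℓ, S) + ∫_{t₀}^{t} δ*((Φ(t,s)B(s))ᵀℓ, U) ds. -/
open Matrix MeasureTheory intervalIntegral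
open scoped Pointwise

/-!
Pairing with `ℓ` turns a point `Φ(t,t₀)y₀ + ∫ Φ(t,s)B(s)u(s) ds` of the reachable set into
`(Φ(t,t₀)ᵀℓ) ⬝ y₀ + ∫ ((Φ(t,s)B(s))ᵀℓ) ⬝ u(s) ds`, so the supremum splits into a supremum over `S`
and a supremum over measurable controls. The latter is bounded by the integral of the pointwise
support function, and this bound is approached by ε-optimal measurable selections: enumerate a
dense sequence in `U` and choose at each time the first term that is ε-optimal there.
-/

noncomputable def supportFunction {ι : Type*} [Fintype ι] (U : Set (ι → ℝ)) (a : ι → ℝ) : ℝ :=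
  sSup ((fun v => a ⬝ᵥ v) '' U)

/-- `R(t)` with `A = Φ(t,t₀)` and `M s = Φ(t,s) B(s)`. -/
def reachableSet {ι ι' κ : Type*} [Fintype ι] [Fintype ι'] [Fintype κ] (A : Matrix ι ι' ℝ)
    (M : ℝ → Matrix ι κ ℝ) (S : Set (ι' → ℝ)) (U : Set (κ → ℝ)) (t₀ t : ℝ) : Set (ι → ℝ) :=
  {x | ∃ y₀ ∈ S, ∃ u : ℝ → κ → ℝ, Measurable u ∧ (∀ s, u s ∈ U) ∧
    x = A *ᵥ y₀ + ∫ s in t₀..t, M s *ᵥ u s}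

theorem Continuous.intervalIntegrable_comp_of_mem_isCompact {E F : Type*} [TopologicalSpace E]
    [NormedAddCommGroup F] {f : ℝ → E → F} (hf : Continuous ↿f) {K : Set E} (hK : IsCompact K)
    {u : ℝ → E} (hu : AEStronglyMeasurable u) (huK : ∀ s, u s ∈ K) (a b : ℝ) :
    IntervalIntegrable (fun s => f s (u s)) volume a b := by
  obtain ⟨C, hC⟩ := (((isCompact_uIcc (a := a) (b := b)).prod hK).image hf).isBounded.exists_norm_le
  rw [intervalIntegrable_iff]
  refine Integrable.mono' (g := fun _ => C) (integrableOn_const measure_Ioc_lt_top.ne)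
    (hf.comp_aestronglyMeasurable (aestronglyMeasurable_id.prodMk hu)).restrict ?_
  filter_upwards [ae_restrict_mem measurableSet_uIoc] with s hs
  exact hC _ ⟨(s, u s), ⟨Set.uIoc_subset_uIcc hs, huK s⟩, rfl⟩

theorem Matrix.dotProduct_intervalIntegral {ι : Type*} [Fintype ι] {f : ℝ → ι → ℝ} {a b : ℝ}
    (hf : IntervalIntegrable f volume a b) (ℓ : ι → ℝ) :
    ℓ ⬝ᵥ ∫ s in a..b, f s = ∫ s in a..b, ℓ ⬝ᵥ f s :=
  ((dotProductBilin ℝ ℝ ℓ).toContinuousLinearMap.intervalIntegral_comp_comm hf).symm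

section SupportFunction

variable {ι : Type*} [Fintype ι] {U : Set (ι → ℝ)}

theorem isLUB_supportFunction (hne : U.Nonempty) (hU : IsCompact U) (a : ι → ℝ) :
    IsLUB ((fun v => a ⬝ᵥ v) '' U) (supportFunction U a) :=
  (hU.image (continuous_const.dotProduct continuous_id)).isLUB_sSup (hne.image _)

theorem continuous_supportFunction (hU : IsCompact U) : Continuous (supportFunction U) :=
  hU.continuous_sSup (f := fun a v => a ⬝ᵥ v) (continuous_fst.dotProduct continuous_snd)

theorem exists_measurable_selection_supportFunction_sub_lt {α : Type*} [MeasurableSpace α]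
    (hne : U.Nonempty) (hU : IsCompact U) {a : α → ι → ℝ} (ha : Measurable a) {ε : ℝ}
    (hε : 0 < ε) :
    ∃ u : α → ι → ℝ, Measurable u ∧ (∀ x, u x ∈ U) ∧
      ∀ x, supportFunction U (a x) - ε < a x ⬝ᵥ u x := by
  classical
  have : Nonempty U := hne.to_subtype
  obtain ⟨e, he⟩ := TopologicalSpace.exists_dense_seq U
  have hgood : ∀ x, ∃ k, supportFunction U (a x) - ε < a x ⬝ᵥ (e k : ι → ℝ) := by
    intro x
    obtain ⟨_, ⟨v, hv, rfl⟩, hlt, -⟩ :=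
      (isLUB_supportFunction hne hU (a x)).exists_between (sub_lt_self _ hε)
    exact he.exists_mem_open
      (isOpen_lt continuous_const (continuous_const.dotProduct continuous_subtype_val))
      ⟨⟨v, hv⟩, hlt⟩
  have hmeas : ∀ k, MeasurableSet {x | supportFunction U (a x) - ε < a x ⬝ᵥ (e k : ι → ℝ)} :=
    fun k => measurableSet_lt (((continuous_supportFunction hU).measurable.comp ha).sub_const ε)
      ((continuous_id.dotProduct continuous_const).measurable.comp ha)
  exact ⟨fun x => e (Nat.find (hgood x)), Measurable.find (f := fun k _ => (e k : ι → ℝ))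
    (fun _ => measurable_const) hmeas hgood,
    fun x => (e _).2, fun x => Nat.find_spec (hgood x)⟩

theorem isLUB_integral_dotProduct_selections (hne : U.Nonempty) (hU : IsCompact U)
    {a : ℝ → ι → ℝ} (ha : Continuous a) {t₀ t : ℝ} (ht : t₀ ≤ t) :
    IsLUB {r | ∃ u : ℝ → ι → ℝ, Measurable u ∧ (∀ s, u s ∈ U) ∧ r = ∫ s in t₀..t, a s ⬝ᵥ u s}
      (∫ s in t₀..t, supportFunction U (a s)) := by
  have hσ : IntervalIntegrable (fun s => supportFunction U (a s)) volume t₀ t :=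
    ((continuous_supportFunction hU).comp ha).intervalIntegrable t₀ t
  have hint : ∀ u : ℝ → ι → ℝ, Measurable u → (∀ s, u s ∈ U) →
      IntervalIntegrable (fun s => a s ⬝ᵥ u s) volume t₀ t := fun u hu hUu =>
    Continuous.intervalIntegrable_comp_of_mem_isCompact (f := fun s v => a s ⬝ᵥ v)
      ((ha.comp continuous_fst).dotProduct continuous_snd) hU hu.aestronglyMeasurable hUu t₀ t
  refine ⟨?_, fun b hb => le_of_forall_lt fun w hw => ?_⟩
  · rintro _ ⟨u, hu, hUu, rfl⟩
    exact integral_mono_on ht (hint u hu hUu) hσ fun s _ =>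
      (isLUB_supportFunction hne hU (a s)).1 ⟨u s, hUu s, rfl⟩
  set ε := ((∫ s in t₀..t, supportFunction U (a s)) - w) / (t - t₀ + 1)
  have hε : 0 < ε := div_pos (sub_pos.2 hw) (by linarith)
  have hεt : ε * (t - t₀) < (∫ s in t₀..t, supportFunction U (a s)) - w := by
    calc ε * (t - t₀) < ε * (t - t₀ + 1) := by gcongr; linarith
      _ = _ := div_mul_cancel₀ _ (by linarith)
  obtain ⟨u, hu, hUu, hua⟩ :=
    exists_measurable_selection_supportFunction_sub_lt hne hU ha.measurable hε
  refine lt_of_lt_of_le ?_ (hb ⟨u, hu, hUu, rfl⟩)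
  calc w < (∫ s in t₀..t, supportFunction U (a s)) - ε * (t - t₀) := by linarith
    _ = ∫ s in t₀..t, (supportFunction U (a s) - ε) := by
      rw [integral_sub hσ intervalIntegrable_const, intervalIntegral.integral_const, smul_eq_mul,
        mul_comm]
    _ ≤ ∫ s in t₀..t, a s ⬝ᵥ u s :=
      integral_mono_on ht (hσ.sub intervalIntegrable_const) (hint u hu hUu)
        fun s _ => (hua s).le

end SupportFunction

section ReachableSet

variable {ι ι' κ : Type*} [Fintype ι] [Fintype ι'] [Fintype κ] {A : Matrix ι ι' ℝ}
  {M : ℝ → Matrix ι κ ℝ} {S : Set (ι' → ℝ)} {U : Set (κ → ℝ)} {t₀ t : ℝ}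

theorem dotProduct_image_reachableSet (hM : Continuous M) (hU : IsCompact U) (ℓ : ι → ℝ) :
    (fun x => ℓ ⬝ᵥ x) '' reachableSet A M S U t₀ t =
      (fun y => Aᵀ *ᵥ ℓ ⬝ᵥ y) '' S +
        {r | ∃ u : ℝ → κ → ℝ, Measurable u ∧ (∀ s, u s ∈ U) ∧
          r = ∫ s in t₀..t, (M s)ᵀ *ᵥ ℓ ⬝ᵥ u s} := by
  have hpair : ∀ y₀ u, Measurable u → (∀ s, u s ∈ U) →
      ℓ ⬝ᵥ (A *ᵥ y₀ + ∫ s in t₀..t, M s *ᵥ u s) =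
        Aᵀ *ᵥ ℓ ⬝ᵥ y₀ + ∫ s in t₀..t, (M s)ᵀ *ᵥ ℓ ⬝ᵥ u s := by
    intro y₀ u hu hUu
    have hint := Continuous.intervalIntegrable_comp_of_mem_isCompact (f := fun s v => M s *ᵥ v)
      ((hM.comp continuous_fst).matrix_mulVec continuous_snd) hU hu.aestronglyMeasurable hUu t₀ t
    simp only [dotProduct_add, dotProduct_intervalIntegral hint, dotProduct_mulVec,
      mulVec_transpose]
  ext r
  constructor
  · rintro ⟨_, ⟨y₀, hy₀, u, hu, hUu, rfl⟩, rfl⟩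
    exact ⟨_, ⟨y₀, hy₀, rfl⟩, _, ⟨u, hu, hUu, rfl⟩, (hpair y₀ u hu hUu).symm⟩
  · rintro ⟨_, ⟨y₀, hy₀, rfl⟩, _, ⟨u, hu, hUu, rfl⟩, rfl⟩
    exact ⟨_, ⟨y₀, hy₀, u, hu, hUu, rfl⟩, hpair y₀ u hu hUu⟩

theorem sSup_dotProduct_image_reachableSet (hM : Continuous M) (hSne : S.Nonempty)
    (hS : IsCompact S) (hUne : U.Nonempty) (hU : IsCompact U) (ht : t₀ ≤ t) (ℓ : ι → ℝ) :
    sSup ((fun x => ℓ ⬝ᵥ x) '' reachableSet A M S U t₀ t) =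
      supportFunction S (Aᵀ *ᵥ ℓ) + ∫ s in t₀..t, supportFunction U ((M s)ᵀ *ᵥ ℓ) := by
  have hlub := (isLUB_supportFunction hSne hS (Aᵀ *ᵥ ℓ)).add
    (isLUB_integral_dotProduct_selections (a := fun s => (M s)ᵀ *ᵥ ℓ) hUne hU
      (hM.matrix_transpose.matrix_mulVec continuous_const) ht)
  rw [dotProduct_image_reachableSet hM hU]
  exact hlub.csSup_eq hlub.nonempty

end ReachableSet

theorem suppFun_reachable_set_general {n m : ℕ}
    (Φ : ℝ → ℝ → Matrix (Fin n) (Fin n) ℝ)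
    (B : ℝ → Matrix (Fin n) (Fin m) ℝ)
    (hΦ : Continuous fun p : ℝ × ℝ => Φ p.1 p.2) (hB : Continuous B)
    (S : Set (Fin n → ℝ)) (U : Set (Fin m → ℝ))
    (hSne : S.Nonempty) (hScomp : IsCompact S)
    (hUne : U.Nonempty) (hUcomp : IsCompact U)
    (t₀ t : ℝ) (ht : t₀ ≤ t) (ℓ : Fin n → ℝ) :
    sSup ((fun x => ℓ ⬝ᵥ x) ''
        {x | ∃ y₀ ∈ S, ∃ u : ℝ → Fin m → ℝ, Measurable u ∧ (∀ s, u s ∈ U) ∧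
          x = (Φ t t₀).mulVec y₀ + ∫ s in t₀..t, (Φ t s * B s).mulVec (u s)}) =
      sSup ((fun x => (Φ t t₀)ᵀ.mulVec ℓ ⬝ᵥ x) '' S) +
        ∫ s in t₀..t, sSup ((fun v => (Φ t s * B s)ᵀ.mulVec ℓ ⬝ᵥ v) '' U) :=
  sSup_dotProduct_image_reachableSet
    ((hΦ.comp (continuous_const.prodMk continuous_id)).matrix_mul hB) hSne hScomp hUne hUcomp ht ℓ

/-- Support function of the reachable set
`R(t) = Φ(t,t₀)S + ∫_{t₀}^{t} Φ(t,s)B(s)U ds`: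
`δ*(ℓ, R(t)) = δ*(Φ(t,t₀)ᵀℓ, S) + ∫_{t₀}^{t} δ*((Φ(t,s)B(s))ᵀℓ, U) ds`. -/
theorem suppFun_reachable_set {n m : ℕ}
    (Φ : ℝ → ℝ → Matrix (Fin n) (Fin n) ℝ)
    (B : ℝ → Matrix (Fin n) (Fin m) ℝ)
    (hΦ : Continuous fun p : ℝ × ℝ => Φ p.1 p.2) (hB : Continuous B)
    (hΦid : ∀ s, Φ s s = 1)
    (S : Set (Fin n → ℝ)) (U : Set (Fin m → ℝ))
    (hSne : S.Nonempty) (hSconv : Convex ℝ S) (hScomp : IsCompact S)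
    (hUne : U.Nonempty) (hUconv : Convex ℝ U) (hUcomp : IsCompact U)
    (t₀ t : ℝ) (ht : t₀ ≤ t) (ℓ : Fin n → ℝ) :
    sSup ((fun x => ℓ ⬝ᵥ x) ''
        {x | ∃ y₀ ∈ S, ∃ u : ℝ → Fin m → ℝ, Measurable u ∧ (∀ s, u s ∈ U) ∧
          x = (Φ t t₀).mulVec y₀ + ∫ s in t₀..t, (Φ t s * B s).mulVec (u s)}) =
      sSup ((fun x => (Φ t t₀)ᵀ.mulVec ℓ ⬝ᵥ x) '' S) +
        ∫ s in t₀..t, sSup ((fun v => (Φ t s * B s)ᵀ.mulVec ℓ ⬝ᵥ v) '' U) :=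
  suppFun_reachable_set_general Φ B hΦ hB S U hSne hScomp hUne hUcomp t₀ t ht ℓ
end
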